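/- arXiv:1810.11344 — 9 statements merged into one kernel-verified Lean document; each statement's English description precedes it below -/
import Mathlib

section
/- For all θ > 0, θ* > 0, w1* ∈ (0.5,1), letting w2* = 1 − w1*, the quantity ∫ [e^{yθ}/(e^{yθ} + e^{−yθ})]·(w1*·φ(y−θ*) + w2*·φ(y+θ*)) dy is strictly greater than 1/2, where φ is the standard Gaussian density. -/
open MeasureTheory Real

noncomputable def gauss (x : ℝ) : ℝ := (Real.sqrt (2 * Real.pi))⁻¹ * Real.exp (-(x ^ 2) / 2)

/-!
Write the posterior weight as `exp a / (exp a + exp (-a)) = (1 + tanh a) / 2` with `a = yθ`.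
Against `φ(y - θ*)` it integrates to `(1 + I) / 2`, where `I = ∫ tanh (yθ) φ(y - θ*) dy`, and
against `φ(y + θ*)` to `(1 - I) / 2`, because `tanh` is odd and `φ` even. So the EM weight is
`1/2 + (w₁* - 1/2) I`, and `I > 0`: pairing `y` with `-y`,
`2I = ∫ tanh (yθ) (φ(y - θ*) - φ(y + θ*))`, whose integrand is
nonnegative and positive for `y > 0`.
-/

namespace Real

@[fun_prop]
theorem continuous_tanh : Continuous tanh := by
  simp_rw [funext tanh_eq_sinh_div_cosh]
  exact continuous_sinh.div continuous_cosh fun x => (cosh_pos x).ne'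

theorem tanh_pos {x : ℝ} (hx : 0 < x) : 0 < tanh x := by
  rw [tanh_eq]
  exact div_pos (sub_pos.2 (exp_lt_exp.2 (by linarith))) (by positivity)

theorem tanh_neg_of_neg {x : ℝ} (hx : x < 0) : tanh x < 0 := by
  simpa [tanh_neg] using tanh_pos (neg_pos.2 hx)

theorem exp_div_exp_add_exp_neg (x : ℝ) : exp x / (exp x + exp (-x)) = (1 + tanh x) / 2 := by
  rw [tanh_eq]
  field_simp
  ring

end Real

theorem MeasureTheory.Integrable.tanh_mul {f : ℝ → ℝ} (hf : Integrable f) (θ : ℝ) :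
    Integrable fun y => tanh (y * θ) * f y :=
  hf.bdd_mul (by fun_prop) (c := 1) <| ae_of_all _ fun y => (abs_tanh_lt_one _).le

theorem integral_pos_of_pos_on {α : Type*} [MeasurableSpace α] {μ : Measure α} {f : α → ℝ}
    {s : Set α} (hf : 0 ≤ f) (hfi : Integrable f μ) (hs : μ s ≠ 0)
    (hpos : ∀ x ∈ s, 0 < f x) :
    0 < ∫ x, f x ∂μ :=
  (integral_pos_iff_support_of_nonneg hf hfi).2 <|
    (pos_iff_ne_zero.2 hs).trans_le <| measure_mono fun x hx => (hpos x hx).ne'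

theorem gauss_sub_eq_gaussianPDFReal (c x : ℝ) :
    gauss (x - c) = ProbabilityTheory.gaussianPDFReal c 1 x := by
  simp [gauss, ProbabilityTheory.gaussianPDFReal]

theorem integrable_gauss_sub (c : ℝ) : Integrable fun y => gauss (y - c) := by
  simpa only [gauss_sub_eq_gaussianPDFReal] using ProbabilityTheory.integrable_gaussianPDFReal c 1

theorem integral_gauss_sub (c : ℝ) : ∫ y, gauss (y - c) = 1 := by
  simpa only [gauss_sub_eq_gaussianPDFReal] using
    ProbabilityTheory.integral_gaussianPDFReal_eq_one c one_ne_zero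

theorem gauss_neg (x : ℝ) : gauss (-x) = gauss x := by
  simp [gauss]

theorem gauss_lt_gauss_of_sq_lt {x y : ℝ} (h : y ^ 2 < x ^ 2) : gauss x < gauss y := by
  unfold gauss
  gcongr

theorem integral_tanh_mul_gauss_sub_neg (θ c : ℝ) :
    ∫ y, tanh (y * θ) * gauss (y - -c) = -∫ y, tanh (y * θ) * gauss (y - c) := by
  rw [← integral_neg, ← integral_neg_eq_self]
  congr 1 with y
  rw [neg_mul, tanh_neg, ← gauss_neg]
  ring_nf

theorem integral_tanh_mul_gauss_sub_pos {θ c : ℝ} (hθ : 0 < θ) (hc : 0 < c) :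
    0 < ∫ y, tanh (y * θ) * gauss (y - c) := by
  have hint (c : ℝ) := (integrable_gauss_sub c).tanh_mul θ
  have hgap : 2 * ∫ y, tanh (y * θ) * gauss (y - c)
      = ∫ y, tanh (y * θ) * (gauss (y - c) - gauss (y - -c)) := by
    simp_rw [mul_sub]
    rw [integral_sub (hint c) (hint (-c)), integral_tanh_mul_gauss_sub_neg]
    ring
  have hpos : ∀ y, 0 < y → 0 < tanh (y * θ) * (gauss (y - c) - gauss (y - -c)) := fun y hy =>
    mul_pos (tanh_pos (by positivity)) (sub_pos.2 (gauss_lt_gauss_of_sq_lt (by nlinarith)))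
  have hnonneg : ∀ y, 0 ≤ tanh (y * θ) * (gauss (y - c) - gauss (y - -c)) := by
    intro y
    rcases lt_trichotomy y 0 with hy | rfl | hy
    · exact mul_nonneg_of_nonpos_of_nonpos (tanh_neg_of_neg (by nlinarith)).le
        (sub_nonpos.2 (gauss_lt_gauss_of_sq_lt (by nlinarith)).le)
    · simp
    · exact (hpos y hy).le
  rw [← mul_pos_iff_of_pos_left two_pos, hgap]
  exact integral_pos_of_pos_on hnonneg
    (((integrable_gauss_sub c).sub (integrable_gauss_sub (-c))).tanh_mul θ)
    (s := Set.Ioi 0) (by simp) hpos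

theorem integrable_one_add_tanh_mul_gauss_sub (θ c : ℝ) :
    Integrable fun y => (1 + tanh (y * θ)) / 2 * gauss (y - c) := by
  simp_rw [add_div, add_mul, div_mul_eq_mul_div, one_mul]
  exact ((integrable_gauss_sub c).div_const 2).add
    (((integrable_gauss_sub c).tanh_mul θ).div_const 2)

theorem integral_one_add_tanh_mul_gauss_sub (θ c : ℝ) :
    ∫ y, (1 + tanh (y * θ)) / 2 * gauss (y - c)
      = (1 + ∫ y, tanh (y * θ) * gauss (y - c)) / 2 := by
  simp_rw [add_div, add_mul, div_mul_eq_mul_div, one_mul]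
  rw [integral_add ((integrable_gauss_sub c).div_const 2)
      (((integrable_gauss_sub c).tanh_mul θ).div_const 2),
    integral_div, integral_div, integral_gauss_sub]

theorem stmt_1 (θ θs w1s : ℝ) (hθ : 0 < θ) (hθs : 0 < θs)
    (hw1s : w1s ∈ Set.Ioo (1/2 : ℝ) 1) :
    (1/2 : ℝ) < ∫ y : ℝ,
      (Real.exp (y * θ) / (Real.exp (y * θ) + Real.exp (-(y * θ)))) *
      (w1s * gauss (y - θs) + (1 - w1s) * gauss (y + θs)) := by
  obtain ⟨hw1, -⟩ := hw1s
  have hI := integral_tanh_mul_gauss_sub_pos hθ hθs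
  have hsplit : ∀ y, exp (y * θ) / (exp (y * θ) + exp (-(y * θ)))
      * (w1s * gauss (y - θs) + (1 - w1s) * gauss (y + θs))
      = w1s * ((1 + tanh (y * θ)) / 2 * gauss (y - θs))
        + (1 - w1s) * ((1 + tanh (y * θ)) / 2 * gauss (y - -θs)) := fun y => by
    rw [exp_div_exp_add_exp_neg, sub_neg_eq_add]
    ring
  simp_rw [hsplit]
  rw [integral_add ((integrable_one_add_tanh_mul_gauss_sub θ θs).const_mul _)
      ((integrable_one_add_tanh_mul_gauss_sub θ (-θs)).const_mul _),
    integral_const_mul, integral_const_mul, integral_one_add_tanh_mul_gauss_sub,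
    integral_one_add_tanh_mul_gauss_sub, integral_tanh_mul_gauss_sub_neg]
  nlinarith
end

section
/- For all w1 ∈ (1/2, 1], w1* ∈ (1/2, 1) with w1 > w1*, and all integers k ≥ 2 (indeed k > 1), setting γ = (2w1* − 1)/(2w1 − 1) ∈ (0,1), the inequality (w1 − w1*)·(1 + 2γ)^{2k} + (w1* + w1 − 1)·(2γ − 1)^{2k} − (2w1 − 1) > 0 holds. -/
/-!
Put `d = 2 w₁ - 1` and `γ = (2 w₁* - 1) / d`. Then `w₁ - w₁* = d (1 - γ) / 2` and
`w₁* + w₁ - 1 = d (1 + γ) / 2`, so the claim is `F γ k > 2` for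
`F γ k = (1 - γ) (1 + 2γ)^{2k} + (1 + γ) (2γ - 1)^{2k}`. One checks `F γ 1 = 2`, and
`F γ (k + 1) - F γ k = 4γ (1 - γ) (1 + γ) ((1 + 2γ)^{2k} - (2γ - 1)^{2k})`, which is positive
for `0 < γ < 1` and `k ≥ 1` because `|2γ - 1| < 1 + 2γ`.
-/

def emTaylorCoeff (g : ℝ) (k : ℕ) : ℝ :=
  (1 - g) * (1 + 2 * g) ^ (2 * k) + (1 + g) * (2 * g - 1) ^ (2 * k)

lemma emTaylorCoeff_one (g : ℝ) : emTaylorCoeff g 1 = 2 := by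
  unfold emTaylorCoeff
  ring

lemma emTaylorCoeff_succ_sub (g : ℝ) (k : ℕ) :
    emTaylorCoeff g (k + 1) - emTaylorCoeff g k =
      4 * g * (1 - g) * (1 + g) * ((1 + 2 * g) ^ (2 * k) - (2 * g - 1) ^ (2 * k)) := by
  unfold emTaylorCoeff
  rw [show 2 * (k + 1) = 2 * k + 2 by ring]
  ring

lemma pow_two_mul_sub_one_lt {g : ℝ} (hg : 0 < g) {k : ℕ} (hk : k ≠ 0) :
    (2 * g - 1) ^ (2 * k) < (1 + 2 * g) ^ (2 * k) := by
  rw [pow_mul, pow_mul]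
  exact pow_lt_pow_left₀ (by nlinarith) (sq_nonneg _) hk

lemma emTaylorCoeff_lt_succ {g : ℝ} (hg₀ : 0 < g) (hg₁ : g < 1) {k : ℕ} (hk : k ≠ 0) :
    emTaylorCoeff g k < emTaylorCoeff g (k + 1) := by
  have hfactor : 0 < 4 * g * (1 - g) * (1 + g) := by
    have := sub_pos.2 hg₁
    positivity
  have hstep := mul_pos hfactor (sub_pos.2 (pow_two_mul_sub_one_lt hg₀ hk))
  linarith [emTaylorCoeff_succ_sub g k]

lemma two_lt_emTaylorCoeff {g : ℝ} (hg₀ : 0 < g) (hg₁ : g < 1) {k : ℕ} (hk : 2 ≤ k) :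
    2 < emTaylorCoeff g k := by
  induction k, hk using Nat.le_induction with
  | base => simpa [emTaylorCoeff_one] using emTaylorCoeff_lt_succ hg₀ hg₁ one_ne_zero
  | succ n hn ih => exact ih.trans (emTaylorCoeff_lt_succ hg₀ hg₁ (by omega))

theorem stmt_6_general (w1 w1s : ℝ)
    (hw1s : w1s ∈ Set.Ioo (1/2 : ℝ) 1) (hgt : w1s < w1) (k : ℕ) (hk : 2 ≤ k) :
    0 < (w1 - w1s) * (1 + 2 * ((2 * w1s - 1) / (2 * w1 - 1))) ^ (2 * k) +
      (w1s + w1 - 1) * (2 * ((2 * w1s - 1) / (2 * w1 - 1)) - 1) ^ (2 * k) -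
      (2 * w1 - 1) := by
  have hd : 0 < 2 * w1 - 1 := by linarith [hw1s.1]
  set g := (2 * w1s - 1) / (2 * w1 - 1)
  have hg₀ : 0 < g := div_pos (by linarith [hw1s.1]) hd
  have hg₁ : g < 1 := (div_lt_one hd).2 (by linarith)
  have hgd : g * (2 * w1 - 1) = 2 * w1s - 1 := div_mul_cancel₀ _ hd.ne'
  have hreduce : (w1 - w1s) * (1 + 2 * g) ^ (2 * k) + (w1s + w1 - 1) * (2 * g - 1) ^ (2 * k) -
      (2 * w1 - 1) = (2 * w1 - 1) / 2 * (emTaylorCoeff g k - 2) := by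
    rw [show w1 - w1s = (2 * w1 - 1) * (1 - g) / 2 by linarith,
      show w1s + w1 - 1 = (2 * w1 - 1) * (1 + g) / 2 by linarith, emTaylorCoeff]
    ring
  rw [hreduce]
  exact mul_pos (half_pos hd) (sub_pos.2 (two_lt_emTaylorCoeff hg₀ hg₁ hk))

theorem stmt_6 (w1 w1s : ℝ) (hw1 : w1 ∈ Set.Ioc (1/2 : ℝ) 1)
    (hw1s : w1s ∈ Set.Ioo (1/2 : ℝ) 1) (hgt : w1s < w1) (k : ℕ) (hk : 2 ≤ k) :
    0 < (w1 - w1s) * (1 + 2 * ((2 * w1s - 1) / (2 * w1 - 1))) ^ (2 * k) +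
      (w1s + w1 - 1) * (2 * ((2 * w1s - 1) / (2 * w1 - 1)) - 1) ^ (2 * k) -
      (2 * w1 - 1) :=
  stmt_6_general w1 w1s hw1s hgt k hk
end

section
/- For all real y ≥ 0, 0 < θ* ≤ θ, and w1 ∈ [1/2, 1) with w2 = 1 − w1, the inequality (w2/w1)^{θ*/(2θ)}·e^{yθ*} + (w1/w2)^{θ*/(2θ)}·e^{−yθ*} ≥ 2·(w1·e^{−yθ*} + w2·e^{yθ*}) holds. -/
/-! Put `a = θ*/(2θ) ∈ (0, 1/2]`, `E = e^{yθ*} ≥ F = e^{-yθ*}` and `x = (w2/w1)^a`, so that the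
right-hand side is `x E + x⁻¹ F`. Since `w2/w1 ≤ 1` and `a ≤ 1/2`, `x ≥ √(w2/w1) ≥ 2 w2`, the last
step being `4 w1 w2 ≤ 1`. The claim then follows from the decomposition
`x E + x⁻¹ F - 2 (w1 F + w2 E) = (x - 2 w2)(E - F) + (x + x⁻¹ - 2) F`. -/

open Real

lemma two_le_add_inv {x : ℝ} (hx : 0 < x) : 2 ≤ x + x⁻¹ := by
  have hxx : x * x⁻¹ = 1 := mul_inv_cancel₀ hx.ne'
  nlinarith [sq_nonneg (x - 1), inv_pos.mpr hx]

lemma two_mul_add_le_mul_add_inv_mul {w x E F : ℝ} (hx : 0 < x) (hwx : 2 * (1 - w) ≤ x)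
    (hF : 0 ≤ F) (hFE : F ≤ E) :
    2 * (w * F + (1 - w) * E) ≤ x * E + x⁻¹ * F := by
  have hdecomp : x * E + x⁻¹ * F - 2 * (w * F + (1 - w) * E)
      = (x - 2 * (1 - w)) * (E - F) + (x + x⁻¹ - 2) * F := by ring
  nlinarith [mul_nonneg (sub_nonneg.mpr hwx) (sub_nonneg.mpr hFE),
    mul_nonneg (sub_nonneg.mpr (two_le_add_inv hx)) hF]

lemma two_mul_one_sub_le_sqrt_div {w : ℝ} (hw : 0 < w) :
    2 * (1 - w) ≤ √((1 - w) / w) := by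
  rcases le_or_gt (1 - w) 0 with h | h
  · exact (mul_nonpos_of_nonneg_of_nonpos zero_le_two h).trans (sqrt_nonneg _)
  · rw [le_sqrt (by positivity) (by positivity), le_div_iff₀ hw]
    nlinarith [sq_nonneg (1 - 2 * w)]

lemma sqrt_le_rpow_of_le_one {r a : ℝ} (hr : 0 < r) (hr1 : r ≤ 1) (ha : a ≤ 1 / 2) :
    √r ≤ r ^ a := by
  rw [sqrt_eq_rpow]
  exact rpow_le_rpow_of_exponent_ge hr hr1 ha

lemma div_two_mul_le_half {s t : ℝ} (hs : 0 < s) (hst : s ≤ t) : s / (2 * t) ≤ 1 / 2 := by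
  rw [div_le_div_iff₀ (by linarith) two_pos]
  linarith

theorem stmt_7 (y θ θs w1 : ℝ) (hy : 0 ≤ y) (hθs : 0 < θs) (hθ : θs ≤ θ)
    (hw1 : w1 ∈ Set.Ico (1/2 : ℝ) 1) :
    2 * (w1 * Real.exp (-(y * θs)) + (1 - w1) * Real.exp (y * θs)) ≤
      ((1 - w1) / w1) ^ (θs / (2 * θ)) * Real.exp (y * θs) +
      (w1 / (1 - w1)) ^ (θs / (2 * θ)) * Real.exp (-(y * θs)) := by
  obtain ⟨hw1l, hw1r⟩ := hw1
  have hw1pos : 0 < w1 := by linarith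
  have hr : 0 < (1 - w1) / w1 := div_pos (by linarith) hw1pos
  have hr1 : (1 - w1) / w1 ≤ 1 := by rw [div_le_one hw1pos]; linarith
  have hx : 2 * (1 - w1) ≤ ((1 - w1) / w1) ^ (θs / (2 * θ)) :=
    (two_mul_one_sub_le_sqrt_div hw1pos).trans
      (sqrt_le_rpow_of_le_one hr hr1 (div_two_mul_le_half hθs hθ))
  rw [← inv_div (1 - w1), inv_rpow hr.le]
  exact two_mul_add_le_mul_add_inv_mul (rpow_pos_of_pos hr _) hx (exp_nonneg _)
    (exp_le_exp.mpr (by nlinarith))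
end

section
/- Let w1* ∈ (1/2, 1) and θ* > 0. Define, for θ ∈ ℝ and fixed w1 = w1*, H(θ) = ∫ [(w1*·e^{yθ} − w2*·e^{−yθ})/(w1*·e^{yθ} + w2*·e^{−yθ})]·y·(w1*·φ(y−θ*) + w2*·φ(y+θ*)) dy. Then for all θ ≥ θ*, 0 ≤ H'(θ) ≤ e^{−(θ*)²/2} < 1. -/
open MeasureTheory Real

/-!
Write `D_t(y) = w e^{yt} + (1 - w) e^{-yt}` and `p = w φ(· - θ*) + (1 - w) φ(· + θ*)` for the
mixture density. The integrand of `H` is `y p(y)` times the derivative of `s ↦ log (w e^s + (1 - w) e^{-s})`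
at `s = yt`, so differentiating under the integral sign gives
`H'(θ) = ∫ 4 w (1 - w) y² / D_θ(y)² · p(y) dy ≥ 0`.
Completing the square, `p(y) = e^{-θ*²/2} D_{θ*}(y) φ(y)`. As a function of `yt`, `D` is convex
with value `1` at `0`, so `D_{θ*}(y) ≤ max 1 (D_θ(y))` for `θ* ≤ θ`; together with
`D² ≥ 4 w (1 - w)` this gives `4 w (1 - w) D_{θ*}(y) ≤ D_θ(y)²`. Hence the integrand of `H'(θ)` is
at most `e^{-θ*²/2} y² φ(y)`, whose integral is `e^{-θ*²/2}`.
-/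

open ProbabilityTheory Set

/-- The moment generating function `s ↦ 𝔼 e^{sZ}` of a sign `Z = ±1` with `P(Z = 1) = w`;
`signTiltedMean w s` is the mean of `Z` under the law tilted by `e^{sZ}`, i.e. the derivative of
`log (signMgf w)`. -/
noncomputable def signMgf (w s : ℝ) : ℝ := w * exp s + (1 - w) * exp (-s)

noncomputable def signTiltedMean (w s : ℝ) : ℝ := (w * exp s - (1 - w) * exp (-s)) / signMgf w s

theorem sq_signMgf_sub_sq (w s : ℝ) :
    signMgf w s ^ 2 - (w * exp s - (1 - w) * exp (-s)) ^ 2 = 4 * w * (1 - w) := by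
  have h : exp s * exp (-s) = 1 := by rw [← exp_add, add_neg_cancel, exp_zero]
  unfold signMgf
  linear_combination (4 * w * (1 - w)) * h

theorem four_mul_le_sq_signMgf (w s : ℝ) : 4 * w * (1 - w) ≤ signMgf w s ^ 2 := by
  nlinarith [sq_signMgf_sub_sq w s, sq_nonneg (w * exp s - (1 - w) * exp (-s))]

@[simp]
theorem signMgf_zero (w : ℝ) : signMgf w 0 = 1 := by
  simp [signMgf]

theorem continuous_signMgf (w : ℝ) : Continuous (signMgf w) := by
  unfold signMgf
  fun_prop

section UnitWeight

variable {w : ℝ} (hw₀ : 0 ≤ w) (hw₁ : w ≤ 1)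
include hw₀ hw₁

theorem signMgf_pos (s : ℝ) : 0 < signMgf w s := by
  unfold signMgf
  rcases le_total (exp s) (exp (-s)) with h | h <;>
    nlinarith [exp_pos s, exp_pos (-s)]

theorem continuous_signTiltedMean : Continuous (signTiltedMean w) :=
  Continuous.div (by fun_prop) (continuous_signMgf w) fun s => (signMgf_pos hw₀ hw₁ s).ne'

theorem abs_signTiltedMean_le_one (s : ℝ) : |signTiltedMean w s| ≤ 1 := by
  have hD := signMgf_pos hw₀ hw₁ s
  rw [signTiltedMean, abs_div, abs_of_pos hD, div_le_one hD, abs_le]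
  unfold signMgf
  constructor <;> nlinarith [exp_pos s, exp_pos (-s)]

theorem hasDerivAt_signTiltedMean (s : ℝ) :
    HasDerivAt (signTiltedMean w) (4 * w * (1 - w) / signMgf w s ^ 2) s := by
  have hexp : HasDerivAt (fun s => exp s) (exp s) s := hasDerivAt_exp s
  have hexp_neg : HasDerivAt (fun s => exp (-s)) (-exp (-s)) s := by
    simpa using (hasDerivAt_neg s).exp
  have hnum := (hexp.const_mul w).sub (hexp_neg.const_mul (1 - w))
  have hden := (hexp.const_mul w).add (hexp_neg.const_mul (1 - w))
  refine (hnum.div hden (signMgf_pos hw₀ hw₁ s).ne').congr_deriv ?_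
  simp only [Pi.add_apply, Pi.sub_apply]
  rw [← sq_signMgf_sub_sq w s]
  unfold signMgf
  ring

theorem convexOn_signMgf : ConvexOn ℝ univ (signMgf w) := by
  have hneg : ConvexOn ℝ univ fun s : ℝ => exp (-s) :=
    convexOn_exp.comp_linearMap (-LinearMap.id)
  exact (convexOn_exp.smul hw₀).add (hneg.smul (sub_nonneg.2 hw₁))

theorem signMgf_le_max {s t : ℝ} (h : s ∈ uIcc 0 t) : signMgf w s ≤ max 1 (signMgf w t) := by
  simpa using (convexOn_signMgf hw₀ hw₁).le_on_segment (mem_univ 0) (mem_univ t)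
    (by rwa [segment_eq_uIcc])

theorem four_mul_mul_signMgf_le_sq {s t : ℝ} (h : s ∈ uIcc 0 t) :
    4 * w * (1 - w) * signMgf w s ≤ signMgf w t ^ 2 := by
  have hmax := signMgf_le_max hw₀ hw₁ h
  have hD := signMgf_pos hw₀ hw₁ s
  have hsq := four_mul_le_sq_signMgf w t
  have hc₀ : 0 ≤ 4 * w * (1 - w) := by nlinarith
  have hc₁ : 4 * w * (1 - w) ≤ 1 := by nlinarith [sq_nonneg (2 * w - 1)]
  rcases le_total (signMgf w t) 1 with ht | ht
  · rw [max_eq_left ht] at hmax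
    nlinarith
  · rw [max_eq_right ht] at hmax
    nlinarith

end UnitWeight

theorem gauss_sub (a y : ℝ) : gauss (y - a) = exp (-(a ^ 2) / 2) * (exp (y * a) * gauss y) := by
  have h : exp (-(y - a) ^ 2 / 2) = exp (-(a ^ 2) / 2) * (exp (y * a) * exp (-(y ^ 2) / 2)) := by
    rw [← exp_add, ← exp_add]
    ring_nf
  rw [gauss, gauss, h]
  ring

noncomputable def gaussMixture (w a y : ℝ) : ℝ := w * gauss (y - a) + (1 - w) * gauss (y + a)

theorem gaussMixture_eq (w a y : ℝ) :
    gaussMixture w a y = exp (-(a ^ 2) / 2) * (signMgf w (y * a) * gauss y) := by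
  rw [gaussMixture, ← sub_neg_eq_add y a, gauss_sub, gauss_sub, signMgf]
  ring_nf

theorem gaussMixture_nonneg {w : ℝ} (hw₀ : 0 ≤ w) (hw₁ : w ≤ 1) (a y : ℝ) :
    0 ≤ gaussMixture w a y := by
  have := sub_nonneg.2 hw₁
  unfold gaussMixture gauss
  positivity

theorem gaussianPDFReal_one_eq_gauss_sub (a y : ℝ) : gaussianPDFReal a 1 y = gauss (y - a) := by
  simp [gaussianPDFReal, gauss]

theorem integrable_pow_mul_gauss_sub (k : ℕ) (a : ℝ) :
    Integrable (fun y => y ^ k * gauss (y - a)) := by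
  have h : Integrable (fun y : ℝ => y ^ k) (gaussianReal a 1) := by
    refine (integrable_norm_iff (by fun_prop)).1 ?_
    simpa [norm_pow] using (memLp_id_gaussianReal (μ := a) (v := 1) k).integrable_norm_pow'
  rw [gaussianReal_of_var_ne_zero _ one_ne_zero, integrable_withDensity_iff_integrable_smul'
    (measurable_gaussianPDF _ _) (ae_of_all _ fun _ ↦ gaussianPDF_lt_top)] at h
  simpa [toReal_gaussianPDF, gaussianPDFReal_one_eq_gauss_sub, mul_comm] using h

theorem integrable_pow_mul_gaussMixture (k : ℕ) (w a : ℝ) :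
    Integrable fun y => y ^ k * gaussMixture w a y := by
  refine (((integrable_pow_mul_gauss_sub k a).const_mul w).add
    ((integrable_pow_mul_gauss_sub k (-a)).const_mul (1 - w))).congr (ae_of_all _ fun y => ?_)
  simp only [Pi.add_apply, sub_neg_eq_add, gaussMixture]
  ring

theorem integral_sq_mul_gauss : ∫ y, y ^ 2 * gauss y = 1 := by
  have h := integral_gaussianReal_eq_integral_smul (μ := 0) (v := 1) (f := fun y => y ^ 2)
    one_ne_zero
  have hv := variance_fun_id_gaussianReal (μ := 0) (v := 1)
  rw [variance_of_integral_eq_zero (by fun_prop) integral_id_gaussianReal] at hv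
  simp only [gaussianPDFReal_one_eq_gauss_sub, sub_zero, smul_eq_mul] at h
  simpa [h, mul_comm] using hv

theorem hasDerivAt_integral_signTiltedMean {μ : Measure ℝ} {w : ℝ} (hw₀ : 0 ≤ w) (hw₁ : w ≤ 1)
    {p : ℝ → ℝ} (hp : AEStronglyMeasurable p μ) (hp₁ : Integrable (fun y => y * p y) μ)
    (hp₂ : Integrable (fun y => y ^ 2 * p y) μ) (t : ℝ) :
    HasDerivAt (fun t => ∫ y, signTiltedMean w (y * t) * y * p y ∂μ)
      (∫ y, 4 * w * (1 - w) / signMgf w (y * t) ^ 2 * y ^ 2 * p y ∂μ) t := by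
  have hmeas : ∀ t, AEStronglyMeasurable (fun y => signTiltedMean w (y * t) * y * p y) μ :=
    fun t => ((continuous_signTiltedMean hw₀ hw₁).comp (by fun_prop)).mul continuous_id
      |>.aestronglyMeasurable.mul hp
  have hmeas' : AEStronglyMeasurable
      (fun y => 4 * w * (1 - w) / signMgf w (y * t) ^ 2 * y ^ 2 * p y) μ := by
    refine (Continuous.aestronglyMeasurable ?_).mul hp
    exact (continuous_const.div (((continuous_signMgf w).comp (by fun_prop)).pow 2)
      fun y => pow_ne_zero 2 (signMgf_pos hw₀ hw₁ _).ne').mul (by fun_prop)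
  have hint : Integrable (fun y => signTiltedMean w (y * t) * y * p y) μ := by
    refine hp₁.norm.mono' (hmeas t) (ae_of_all _ fun y => ?_)
    rw [mul_assoc, norm_mul]
    exact mul_le_of_le_one_left (norm_nonneg _) (abs_signTiltedMean_le_one hw₀ hw₁ _)
  have hbound : ∀ y, ∀ x ∈ Metric.ball t 1,
      ‖4 * w * (1 - w) / signMgf w (y * x) ^ 2 * y ^ 2 * p y‖ ≤ ‖y ^ 2 * p y‖ := by
    intro y x _
    have hfrac : 0 ≤ 4 * w * (1 - w) / signMgf w (y * x) ^ 2 :=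
      div_nonneg (by nlinarith) (sq_nonneg _)
    rw [mul_assoc, norm_mul, Real.norm_of_nonneg hfrac]
    exact mul_le_of_le_one_left (norm_nonneg _)
      (div_le_one_of_le₀ (four_mul_le_sq_signMgf w _) (sq_nonneg _))
  have hderiv : ∀ y, ∀ x ∈ Metric.ball t 1, HasDerivAt
      (fun t => signTiltedMean w (y * t) * y * p y)
      (4 * w * (1 - w) / signMgf w (y * x) ^ 2 * y ^ 2 * p y) x := by
    intro y x _
    exact (((hasDerivAt_signTiltedMean hw₀ hw₁ (y * x)).comp x
      ((hasDerivAt_id x).const_mul y)).mul_const y |>.mul_const (p y)).congr_deriv (by ring)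
  exact (hasDerivAt_integral_of_dominated_loc_of_deriv_le (Metric.ball_mem_nhds t one_pos)
    (Filter.Eventually.of_forall hmeas) hint hmeas' (Filter.Eventually.of_forall hbound)
    hp₂.norm (Filter.Eventually.of_forall hderiv)).2

theorem deriv_integrand_gaussMixture_le {w a θ : ℝ} (hw₀ : 0 ≤ w) (hw₁ : w ≤ 1) (ha : 0 ≤ a)
    (hθ : a ≤ θ) (y : ℝ) :
    4 * w * (1 - w) / signMgf w (y * θ) ^ 2 * y ^ 2 * gaussMixture w a y ≤
      exp (-(a ^ 2) / 2) * (y ^ 2 * gauss y) := by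
  have hseg : y * a ∈ uIcc 0 (y * θ) := by
    rw [mem_uIcc]
    rcases le_total 0 y with hy | hy
    · exact Or.inl ⟨by positivity, by nlinarith⟩
    · exact Or.inr ⟨by nlinarith, by nlinarith⟩
  have hkey := four_mul_mul_signMgf_le_sq hw₀ hw₁ hseg
  have hD := signMgf_pos hw₀ hw₁ (y * θ)
  have hg : 0 ≤ exp (-(a ^ 2) / 2) * (y ^ 2 * gauss y) := by unfold gauss; positivity
  calc 4 * w * (1 - w) / signMgf w (y * θ) ^ 2 * y ^ 2 * gaussMixture w a y
      = exp (-(a ^ 2) / 2) * (y ^ 2 * gauss y) *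
          (4 * w * (1 - w) * signMgf w (y * a) / signMgf w (y * θ) ^ 2) := by
        rw [gaussMixture_eq]; ring
    _ ≤ exp (-(a ^ 2) / 2) * (y ^ 2 * gauss y) :=
        mul_le_of_le_one_right hg ((div_le_one (by positivity)).2 hkey)

theorem stmt_9 (θs w1s : ℝ) (hθs : 0 < θs) (hw1s : w1s ∈ Set.Ioo (1/2 : ℝ) 1) :
    ∀ θ : ℝ, θs ≤ θ →
      0 ≤ deriv (fun t : ℝ => ∫ y : ℝ,
        ((w1s * Real.exp (y * t) - (1 - w1s) * Real.exp (-(y * t))) /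
          (w1s * Real.exp (y * t) + (1 - w1s) * Real.exp (-(y * t)))) * y *
        (w1s * gauss (y - θs) + (1 - w1s) * gauss (y + θs))) θ ∧
      deriv (fun t : ℝ => ∫ y : ℝ,
        ((w1s * Real.exp (y * t) - (1 - w1s) * Real.exp (-(y * t))) /
          (w1s * Real.exp (y * t) + (1 - w1s) * Real.exp (-(y * t)))) * y *
        (w1s * gauss (y - θs) + (1 - w1s) * gauss (y + θs))) θ ≤
        Real.exp (-(θs ^ 2) / 2) ∧
      Real.exp (-(θs ^ 2) / 2) < 1 := by
  intro θ hθ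
  have hw₀ : 0 ≤ w1s := by linarith [hw1s.1]
  have hw₁ : w1s ≤ 1 := hw1s.2.le
  have hH := (hasDerivAt_integral_signTiltedMean hw₀ hw₁ (p := gaussMixture w1s θs)
    (by unfold gaussMixture gauss; fun_prop)
    (by simpa using integrable_pow_mul_gaussMixture 1 w1s θs)
    (integrable_pow_mul_gaussMixture 2 w1s θs) θ).deriv
  have hH'_nonneg : ∀ y, 0 ≤ 4 * w1s * (1 - w1s) / signMgf w1s (y * θ) ^ 2 * y ^ 2 *
      gaussMixture w1s θs y := fun y => mul_nonneg (mul_nonneg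
    (div_nonneg (by nlinarith) (sq_nonneg _)) (sq_nonneg y)) (gaussMixture_nonneg hw₀ hw₁ _ _)
  refine ⟨(integral_nonneg hH'_nonneg).trans_eq hH.symm, ?_, exp_lt_one_iff.2 (by nlinarith)⟩
  calc deriv _ θ = _ := hH
    _ ≤ ∫ y, exp (-(θs ^ 2) / 2) * (y ^ 2 * gauss y) :=
        integral_mono_of_nonneg (ae_of_all _ hH'_nonneg)
          ((by simpa using integrable_pow_mul_gauss_sub 2 0 :
            Integrable fun y => y ^ 2 * gauss y).const_mul _)
          (ae_of_all _ (deriv_integrand_gaussMixture_le hw₀ hw₁ hθs.le hθ))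
    _ = exp (-(θs ^ 2) / 2) := by rw [integral_const_mul, integral_sq_mul_gauss, mul_one]
end

section
/- For the symmetric two-component Gaussian mixture with equal weights, the population EM mean-update h(θ) = ∫ tanh(yθ)·y·(½φ(y−θ*) + ½φ(y+θ*)) dy (θ* > 0) satisfies: h(θ) > θ for θ ∈ (−∞, −θ*) ∪ (0, θ*), h(θ) < θ for θ ∈ (−θ*, 0) ∪ (θ*, ∞), and h(θ) = θ exactly at θ ∈ {−θ*, 0, θ*}. -/
open MeasureTheory Real


noncomputable def hEM (θs θ : ℝ) : ℝ :=
  ∫ y : ℝ, Real.tanh (y * θ) * y * ((1/2) * gauss (y - θs) + (1/2) * gauss (y + θs))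

lemma gauss_pos (x : ℝ) : 0 < gauss x := by
  have : 0 < Real.sqrt (2 * Real.pi) := Real.sqrt_pos.2 (by positivity)
  exact mul_pos (inv_pos.2 this) (Real.exp_pos _)

lemma continuous_gauss : Continuous gauss := by
  unfold gauss; fun_prop

lemma gauss_eq' (x : ℝ) : gauss x = (Real.sqrt (2 * Real.pi))⁻¹ * Real.exp (-(1/2) * x ^ 2) := by
  unfold gauss; congr 1; ring_nf

lemma integrable_gauss : Integrable gauss := by
  have h := (integrable_exp_neg_mul_sq (by norm_num : (0:ℝ) < 1/2)).const_mul
    (Real.sqrt (2 * Real.pi))⁻¹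
  exact h.congr (Filter.Eventually.of_forall fun x => (gauss_eq' x).symm)

lemma integral_gauss : ∫ x : ℝ, gauss x = 1 := by
  have h2π : (0:ℝ) < 2 * Real.pi := by positivity
  have : ∫ x : ℝ, gauss x
      = (Real.sqrt (2 * Real.pi))⁻¹ * ∫ x : ℝ, Real.exp (-(1/2) * x ^ 2) := by
    rw [← integral_const_mul]
    exact integral_congr_ae (Filter.Eventually.of_forall fun x => gauss_eq' x)
  rw [this, integral_gaussian]
  rw [show Real.pi / (1/2) = 2 * Real.pi by ring]
  rw [inv_mul_cancel₀ (Real.sqrt_pos.2 h2π).ne']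

lemma integrable_id_mul_gauss : Integrable (fun x : ℝ => x * gauss x) := by
  have h := (integrable_mul_exp_neg_mul_sq (by norm_num : (0:ℝ) < 1/2)).const_mul
    (Real.sqrt (2 * Real.pi))⁻¹
  apply h.congr (Filter.Eventually.of_forall fun x => ?_)
  rw [gauss_eq']; ring

lemma integral_id_mul_gauss : ∫ x : ℝ, x * gauss x = 0 := by
  have hodd := integral_neg_eq_self (fun x : ℝ => x * gauss x) (volume : Measure ℝ)
  have : ∀ x : ℝ, (-x) * gauss (-x) = -(x * gauss x) := by
    intro x; unfold gauss; rw [neg_sq]; ring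
  simp_rw [this, integral_neg] at hodd
  linarith

lemma integrable_gauss_shift (c : ℝ) : Integrable (fun y : ℝ => gauss (y - c)) :=
  integrable_gauss.comp_sub_right c

lemma integrable_id_mul_gauss_shift (c : ℝ) : Integrable (fun y : ℝ => y * gauss (y - c)) := by
  have h : Integrable (fun z : ℝ => z * gauss z + c * gauss z) :=
    integrable_id_mul_gauss.add (integrable_gauss.const_mul c)
  have h2 := h.comp_sub_right c
  apply h2.congr (Filter.Eventually.of_forall fun y => ?_)
  simp only []
  ring

lemma integral_id_mul_gauss_shift (c : ℝ) : ∫ y : ℝ, y * gauss (y - c) = c := by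
  have key : ∫ y : ℝ, y * gauss (y - c)
      = ∫ z : ℝ, ((z + c) * gauss z) := by
    rw [← integral_add_right_eq_self (fun z : ℝ => (z + c) * gauss z) (-c)]
    congr 1; funext y; rw [sub_eq_add_neg]; ring_nf
  rw [key]
  have : ∀ z : ℝ, (z + c) * gauss z = z * gauss z + c * gauss z := fun z => by ring
  simp_rw [this]
  rw [integral_add integrable_id_mul_gauss (integrable_gauss.const_mul c),
    integral_id_mul_gauss, integral_const_mul, integral_gauss]
  ring


lemma continuous_tanh' : Continuous Real.tanh := by
  have : Continuous fun x : ℝ => Real.sinh x / Real.cosh x :=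
    Real.continuous_sinh.div Real.continuous_cosh fun x => (Real.cosh_pos x).ne'
  exact this.congr fun x => (Real.tanh_eq_sinh_div_cosh x).symm

lemma abs_tanh_le_one (x : ℝ) : |Real.tanh x| ≤ 1 := by
  rw [Real.tanh_eq_sinh_div_cosh, abs_div, abs_of_pos (Real.cosh_pos x)]
  rw [div_le_one (Real.cosh_pos x)]
  have h1 := Real.sinh_lt_cosh (x := x)
  have h2 := Real.sinh_lt_cosh (x := -x)
  rw [Real.sinh_neg, Real.cosh_neg] at h2
  rw [abs_le]; constructor <;> linarith

lemma tanh_div_strictAnti : StrictAntiOn (fun x : ℝ => Real.tanh x / x) (Set.Ioi 0) := by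
  have key : StrictAntiOn (fun x : ℝ => Real.sinh x / Real.cosh x / x) (Set.Ioi 0) := by
    apply strictAntiOn_of_deriv_neg (convex_Ioi 0)
    · apply ContinuousOn.div
      · exact (Real.continuous_sinh.div Real.continuous_cosh
          fun x => (Real.cosh_pos x).ne').continuousOn
      · exact continuousOn_id
      · intro x hx; exact ne_of_gt hx
    · intro x hx
      rw [interior_Ioi] at hx
      have hx0 : 0 < x := hx
      have h1 : HasDerivAt (fun x : ℝ => Real.sinh x / Real.cosh x)
          ((Real.cosh x * Real.cosh x - Real.sinh x * Real.sinh x) / Real.cosh x ^ 2) x :=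
        (Real.hasDerivAt_sinh x).div (Real.hasDerivAt_cosh x) (Real.cosh_pos x).ne'
      have h2 : HasDerivAt (fun x : ℝ => Real.sinh x / Real.cosh x / x)
          (((Real.cosh x * Real.cosh x - Real.sinh x * Real.sinh x) / Real.cosh x ^ 2 * x
            - Real.sinh x / Real.cosh x * 1) / x ^ 2) x :=
        h1.div (hasDerivAt_id x) hx0.ne'
      rw [h2.deriv]
      apply div_neg_of_neg_of_pos _ (by positivity)
      have hc : Real.cosh x * Real.cosh x - Real.sinh x * Real.sinh x = 1 := by
        have := Real.cosh_sq_sub_sinh_sq x; nlinarith [this]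
      rw [hc]
      have hcp := Real.cosh_pos x
      have hs : x < Real.sinh x * Real.cosh x := by
        have h3 : x < Real.sinh x := Real.self_lt_sinh_iff.2 hx0
        have h4 : 1 ≤ Real.cosh x := Real.one_le_cosh x
        nlinarith [Real.sinh_pos_iff.2 hx0]
      rw [sub_neg, mul_one, div_mul_eq_mul_div, div_lt_div_iff₀ (by positivity) hcp]
      nlinarith [sq_nonneg (Real.cosh x)]
  intro u hu v hv huv
  have := key hu hv huv
  simpa only [Real.tanh_eq_sinh_div_cosh] using this

lemma mul_tanh_lt {u v : ℝ} (hu : 0 < u) (huv : u < v) : u * Real.tanh v < v * Real.tanh u := by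
  have hv : 0 < v := hu.trans huv
  have h := tanh_div_strictAnti (Set.mem_Ioi.2 hu) (Set.mem_Ioi.2 hv) huv
  simp only [] at h
  rw [div_lt_div_iff₀ hv hu] at h
  linarith [h]


-- integrability of the hEM integrand
lemma integrable_id_mul_mix (θs : ℝ) :
    Integrable (fun y : ℝ => y * ((1/2) * gauss (y - θs) + (1/2) * gauss (y + θs))) := by
  have h1 := (integrable_id_mul_gauss_shift θs).const_mul (1/2)
  have h2 := (integrable_id_mul_gauss_shift (-θs)).const_mul (1/2)
  apply (h1.add h2).congr (Filter.Eventually.of_forall fun y => ?_)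
  simp only [Pi.add_apply, sub_neg_eq_add]
  ring

lemma integrable_integrand (θs θ : ℝ) :
    Integrable (fun y : ℝ =>
      Real.tanh (y * θ) * y * ((1/2) * gauss (y - θs) + (1/2) * gauss (y + θs))) := by
  apply Integrable.mono' (integrable_id_mul_mix θs).abs
  · apply Continuous.aestronglyMeasurable
    have : Continuous fun y : ℝ => Real.tanh (y * θ) :=
      continuous_tanh'.comp (continuous_id.mul continuous_const)
    exact (this.mul continuous_id).mul
      ((continuous_const.mul (continuous_gauss.comp (continuous_id.sub continuous_const))).add
        (continuous_const.mul (continuous_gauss.comp (continuous_id.add continuous_const))))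
  · refine Filter.Eventually.of_forall fun y => ?_
    have hmix : 0 < (1/2) * gauss (y - θs) + (1/2) * gauss (y + θs) := by
      have := gauss_pos (y - θs); have := gauss_pos (y + θs); linarith
    rw [Real.norm_eq_abs, abs_mul, abs_mul]
    calc |Real.tanh (y * θ)| * |y| * |(1/2) * gauss (y - θs) + (1/2) * gauss (y + θs)|
        ≤ 1 * |y| * |(1/2) * gauss (y - θs) + (1/2) * gauss (y + θs)| := by
          apply mul_le_mul_of_nonneg_right (mul_le_mul_of_nonneg_right
            (abs_tanh_le_one _) (abs_nonneg _)) (abs_nonneg _)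
      _ = |y * ((1/2) * gauss (y - θs) + (1/2) * gauss (y + θs))| := by
          rw [one_mul, abs_mul]

-- the key pointwise identity at θ = θs
lemma pointwise_self (θs y : ℝ) :
    Real.tanh (y * θs) * y * ((1/2) * gauss (y - θs) + (1/2) * gauss (y + θs))
      = (1/2) * (y * gauss (y - θs)) - (1/2) * (y * gauss (y + θs)) := by
  have hg1 : gauss (y - θs)
      = (Real.sqrt (2 * Real.pi))⁻¹ * (Real.exp (-(y^2)/2 + -(θs^2)/2) * Real.exp (y * θs)) := by
    unfold gauss; rw [← Real.exp_add]; congr 1; ring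
  have hg2 : gauss (y + θs)
      = (Real.sqrt (2 * Real.pi))⁻¹ * (Real.exp (-(y^2)/2 + -(θs^2)/2) * Real.exp (-(y * θs))) := by
    unfold gauss; rw [← Real.exp_add]; congr 1; ring
  rw [Real.tanh_eq_sinh_div_cosh, Real.sinh_eq, Real.cosh_eq, hg1, hg2]
  set a := Real.exp (y * θs) with ha
  set b := Real.exp (-(y * θs)) with hb
  have hab : 0 < a + b := by positivity
  field_simp

lemma hEM_self (θs : ℝ) : hEM θs θs = θs := by
  unfold hEM
  rw [integral_congr_ae (Filter.Eventually.of_forall (pointwise_self θs))]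
  rw [integral_sub ((integrable_id_mul_gauss_shift θs).const_mul (1/2))
      (((integrable_id_mul_gauss_shift (-θs)).const_mul (1/2)).congr
        (Filter.Eventually.of_forall fun y => by simp only [sub_neg_eq_add]))]
  have h2 : ∫ y : ℝ, (1/2) * (y * gauss (y + θs)) = (1/2) * (-θs) := by
    rw [integral_const_mul]
    rw [show (fun y : ℝ => y * gauss (y + θs)) = fun y : ℝ => y * gauss (y - (-θs)) by
      funext y; rw [sub_neg_eq_add]]
    rw [integral_id_mul_gauss_shift]
  have h1 : ∫ y : ℝ, (1/2) * (y * gauss (y - θs)) = (1/2) * θs := by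
    rw [integral_const_mul, integral_id_mul_gauss_shift]
  rw [h1, h2]; ring

lemma hEM_neg (θs θ : ℝ) : hEM θs (-θ) = -hEM θs θ := by
  unfold hEM
  rw [← integral_neg]
  congr 1; funext y
  rw [mul_neg, Real.tanh_neg]; ring

lemma hEM_zero (θs : ℝ) : hEM θs 0 = 0 := by
  unfold hEM
  simp [Real.tanh_zero]


lemma pointwise_pos {θ₁ θ₂ : ℝ} (h1 : 0 < θ₁) (h12 : θ₁ < θ₂) {y : ℝ} (hy : y ≠ 0) :
    0 < (θ₂ * Real.tanh (y * θ₁) - θ₁ * Real.tanh (y * θ₂)) * y := by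
  rcases hy.lt_or_gt with hneg | hpos
  · have hz : 0 < -y := by linarith
    have hu : 0 < -y * θ₁ := mul_pos hz h1
    have huv : -y * θ₁ < -y * θ₂ := by
      apply mul_lt_mul_of_pos_left h12 hz
    have key := mul_tanh_lt hu huv
    have e1 : Real.tanh (y * θ₁) = -Real.tanh (-y * θ₁) := by
      rw [← Real.tanh_neg]; ring_nf
    have e2 : Real.tanh (y * θ₂) = -Real.tanh (-y * θ₂) := by
      rw [← Real.tanh_neg]; ring_nf
    rw [e1, e2]
    nlinarith [key]
  · have hu : 0 < y * θ₁ := mul_pos hpos h1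
    have huv : y * θ₁ < y * θ₂ := mul_lt_mul_of_pos_left h12 hpos
    have key := mul_tanh_lt hu huv
    nlinarith [key]

lemma hEM_mono (θs : ℝ) {θ₁ θ₂ : ℝ} (h1 : 0 < θ₁) (h12 : θ₁ < θ₂) :
    θ₁ * hEM θs θ₂ < θ₂ * hEM θs θ₁ := by
  set F : ℝ → ℝ := fun y =>
    (θ₂ * Real.tanh (y * θ₁) - θ₁ * Real.tanh (y * θ₂)) * y
      * ((1/2) * gauss (y - θs) + (1/2) * gauss (y + θs)) with hF
  have hInt : Integrable F := by
    have := ((integrable_integrand θs θ₁).const_mul θ₂).sub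
      ((integrable_integrand θs θ₂).const_mul θ₁)
    apply this.congr (Filter.Eventually.of_forall fun y => ?_)
    simp only [Pi.sub_apply]; ring
  have hpos : 0 < ∫ y, F y := by
    rw [integral_pos_iff_support_of_nonneg_ae _ hInt]
    · have hsub : Set.Ioi (0:ℝ) ⊆ Function.support F := by
        intro y hy
        have hy0 : y ≠ 0 := ne_of_gt hy
        have hmix : 0 < (1/2) * gauss (y - θs) + (1/2) * gauss (y + θs) := by
          have := gauss_pos (y - θs); have := gauss_pos (y + θs); linarith
        exact (mul_pos (pointwise_pos h1 h12 hy0) hmix).ne'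
      have : volume (Set.Ioi (0:ℝ)) ≤ volume (Function.support F) := measure_mono hsub
      rw [Real.volume_Ioi] at this
      exact lt_of_lt_of_le (by simp) this
    · refine Filter.Eventually.of_forall fun y => ?_
      rcases eq_or_ne y 0 with rfl | hy0
      · simp [hF]
      · have hmix : 0 < (1/2) * gauss (y - θs) + (1/2) * gauss (y + θs) := by
          have := gauss_pos (y - θs); have := gauss_pos (y + θs); linarith
        exact le_of_lt (mul_pos (pointwise_pos h1 h12 hy0) hmix)
  have heq : ∫ y, F y = θ₂ * hEM θs θ₁ - θ₁ * hEM θs θ₂ := by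
    unfold hEM
    rw [← integral_const_mul, ← integral_const_mul,
      ← integral_sub ((integrable_integrand θs θ₁).const_mul θ₂)
        ((integrable_integrand θs θ₂).const_mul θ₁)]
    congr 1; funext y; simp only [hF]; ring
  linarith [heq ▸ hpos]

theorem stmt_10 (θs : ℝ) (hθs : 0 < θs) :
    (∀ θ : ℝ, θ < -θs ∨ (0 < θ ∧ θ < θs) → θ < hEM θs θ) ∧
    (∀ θ : ℝ, (-θs < θ ∧ θ < 0) ∨ θs < θ → hEM θs θ < θ) ∧
    (∀ θ : ℝ, hEM θs θ = θ ↔ θ = -θs ∨ θ = 0 ∨ θ = θs) := by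
  have posSmall : ∀ θ : ℝ, 0 < θ → θ < θs → θ < hEM θs θ := by
    intro θ h0 hlt
    have := hEM_mono θs h0 hlt
    rw [hEM_self] at this
    nlinarith
  have posBig : ∀ θ : ℝ, θs < θ → hEM θs θ < θ := by
    intro θ hlt
    have := hEM_mono θs hθs hlt
    rw [hEM_self] at this
    nlinarith
  have negSmall : ∀ θ : ℝ, θ < -θs → θ < hEM θs θ := by
    intro θ hlt
    have h := posBig (-θ) (by linarith)
    rw [hEM_neg] at h
    linarith
  have negMid : ∀ θ : ℝ, -θs < θ → θ < 0 → hEM θs θ < θ := by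
    intro θ h1 h2
    have h := posSmall (-θ) (by linarith) (by linarith)
    rw [hEM_neg] at h
    linarith
  refine ⟨?_, ?_, ?_⟩
  · rintro θ (h | ⟨h1, h2⟩)
    · exact negSmall θ h
    · exact posSmall θ h1 h2
  · rintro θ (⟨h1, h2⟩ | h)
    · exact negMid θ h1 h2
    · exact posBig θ h
  · intro θ
    constructor
    · intro hfix
      rcases lt_trichotomy θ (-θs) with h | h | h
      · exact absurd hfix (negSmall θ h).ne'
      · exact Or.inl h
      rcases lt_trichotomy θ 0 with h0 | h0 | h0
      · exact absurd hfix (negMid θ h h0).ne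
      · exact Or.inr (Or.inl h0)
      rcases lt_trichotomy θ θs with h1 | h1 | h1
      · exact absurd hfix (posSmall θ h0 h1).ne'
      · exact Or.inr (Or.inr h1)
      · exact absurd hfix (posBig θ h1).ne
    · rintro (rfl | rfl | h)
      · have := hEM_neg θs θs; rw [hEM_self] at this; exact this
      · exact hEM_zero θs
      · rw [h]; exact hEM_self θs
end

section
/- Let θ* > 0, w1* ∈ (1/2, 1), w2* = 1 − w1*. For all y > 0 and w1 ∈ (1/2, w1*), setting γ = (2w1* − 1)/(2w1 − 1) > 1, the inequality (w1* + w1 − 1)·(e^{yθ*(1−γ)} − e^{−yθ*(1−γ)}) + (w1* − w1)·(e^{yθ*(1+γ)} − e^{−yθ*(1+γ)}) > 0 holds. -/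
/-!
With `c = y θ*` and `γ = (2w₁* - 1)/(2w₁ - 1)`, the two terms are `-2A sinh u` and `2B sinh v`
for `A = w₁* + w₁ - 1`, `B = w₁* - w₁`, `u = c(γ - 1)` and `v = c(γ + 1)`, where `0 < u < v` and
`A u = B v`. Since `sinh` is strictly convex on `[0, ∞)` and vanishes at `0`, `sinh x / x` is
strictly increasing there, so `A sinh u = A u · sinh u / u < B v · sinh v / v = B sinh v`.
-/

open Real Set

lemma Real.strictConvexOn_sinh : StrictConvexOn ℝ (Ici 0) sinh := by
  refine strictConvexOn_of_deriv2_pos (convex_Ici 0) continuous_sinh.continuousOn fun x hx ↦ ?_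
  rw [interior_Ici] at hx
  simpa only [Function.iterate_succ, Function.iterate_zero, Function.comp_apply, id_eq,
    deriv_sinh, deriv_cosh] using sinh_pos_iff.2 hx

lemma Real.sinh_div_self_lt_sinh_div_self {u v : ℝ} (hu : 0 < u) (huv : u < v) :
    sinh u / u < sinh v / v := by
  simpa only [sinh_zero, sub_zero] using
    strictConvexOn_sinh.secant_strict_mono self_mem_Ici hu.le (hu.trans huv).le hu.ne'
      (hu.trans huv).ne' huv

lemma Real.mul_sinh_lt_mul_sinh {a b u v : ℝ} (ha : 0 < a) (hu : 0 < u) (huv : u < v)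
    (hab : a * u = b * v) : a * sinh u < b * sinh v := by
  have hv : 0 < v := hu.trans huv
  calc a * sinh u = a * u * (sinh u / u) := by field_simp
    _ < b * v * (sinh v / v) :=
        hab ▸ mul_lt_mul_of_pos_left (sinh_div_self_lt_sinh_div_self hu huv) (by positivity)
    _ = b * sinh v := by field_simp

lemma Real.exp_sub_exp_neg (x : ℝ) : exp x - exp (-x) = 2 * sinh x := by
  rw [sinh_eq]; ring

theorem stmt_12 (θs w1s w1 y : ℝ) (hθs : 0 < θs) (hw1s : w1s ∈ Set.Ioo (1/2 : ℝ) 1)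
    (hw1 : w1 ∈ Set.Ioo (1/2 : ℝ) w1s) (hy : 0 < y) :
    0 < (w1s + w1 - 1) *
        (Real.exp (y * θs * (1 - (2 * w1s - 1) / (2 * w1 - 1))) -
         Real.exp (-(y * θs * (1 - (2 * w1s - 1) / (2 * w1 - 1))))) +
      (w1s - w1) *
        (Real.exp (y * θs * (1 + (2 * w1s - 1) / (2 * w1 - 1))) -
         Real.exp (-(y * θs * (1 + (2 * w1s - 1) / (2 * w1 - 1))))) := by
  obtain ⟨hw1s_gt, -⟩ := hw1s
  obtain ⟨hw1_gt, hw1_lt⟩ := hw1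
  set γ := (2 * w1s - 1) / (2 * w1 - 1)
  have hden : 0 < 2 * w1 - 1 := by linarith
  have hγ : 1 < γ := by rw [lt_div_iff₀ hden]; linarith
  have hc : 0 < y * θs := mul_pos hy hθs
  have hu : 0 < y * θs * (γ - 1) := mul_pos hc (by linarith)
  have huv : y * θs * (γ - 1) < y * θs * (γ + 1) := by gcongr; linarith
  have hbalance : (w1s + w1 - 1) * (y * θs * (γ - 1)) = (w1s - w1) * (y * θs * (γ + 1)) := by
    simp only [γ, div_sub_one hden.ne', div_add_one hden.ne']
    ring
  have key := mul_sinh_lt_mul_sinh (by linarith) hu huv hbalance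
  rw [exp_sub_exp_neg, exp_sub_exp_neg, show y * θs * (1 - γ) = -(y * θs * (γ - 1)) by ring,
    show y * θs * (1 + γ) = y * θs * (γ + 1) by ring, sinh_neg]
  linarith
end

section
/- For every integer k ≥ 1 and every b ∈ (0,1), the inequality (1 − b)·(2b + 1)^{2k+1} + (1 + b)·(2b − 1)^{2k+1} ≥ 2b holds, with strict inequality when k ≥ 2. -/
/-!
Write `A = 2b + 1` and `B = 2b - 1`. Since `A² - 1 = 4b(1 + b)` and `B² - 1 = -4b(1 - b)`, passing
from `k` to `k + 1` adds `4b(1 - b²)(A^(2k+1) - B^(2k+1))`, which is nonnegative for `b ∈ [0, 1]`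
because odd powers are monotone. So the expression is monotone in `k`, and at `k = 1` it equals
`2b + 8b(1 - b²) > 2b`.
-/

def oddPowerCombination (b : ℝ) (k : ℕ) : ℝ :=
  (1 - b) * (2 * b + 1) ^ (2 * k + 1) + (1 + b) * (2 * b - 1) ^ (2 * k + 1)

lemma oddPowerCombination_succ (b : ℝ) (k : ℕ) :
    oddPowerCombination b (k + 1) = oddPowerCombination b k +
      4 * b * (1 - b ^ 2) * ((2 * b + 1) ^ (2 * k + 1) - (2 * b - 1) ^ (2 * k + 1)) := by
  unfold oddPowerCombination
  ring

lemma oddPowerCombination_one (b : ℝ) :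
    oddPowerCombination b 1 = 2 * b + 8 * b * (1 - b ^ 2) := by
  unfold oddPowerCombination
  ring

lemma monotone_oddPowerCombination {b : ℝ} (hb : b ∈ Set.Icc (0 : ℝ) 1) :
    Monotone (oddPowerCombination b) := by
  refine monotone_nat_of_le_succ fun k => ?_
  obtain ⟨hb0, hb1⟩ := hb
  have hpow : (2 * b - 1) ^ (2 * k + 1) ≤ (2 * b + 1) ^ (2 * k + 1) :=
    (Odd.strictMono_pow (R := ℝ) (odd_two_mul_add_one k)).monotone (by linarith)
  have hcoef : 0 ≤ 4 * b * (1 - b ^ 2) := by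
    have : b ^ 2 ≤ 1 := pow_le_one₀ hb0 hb1
    positivity
  rw [oddPowerCombination_succ]
  exact le_add_of_nonneg_right (mul_nonneg hcoef (sub_nonneg.mpr hpow))

lemma lt_oddPowerCombination {b : ℝ} (hb : b ∈ Set.Ioo (0 : ℝ) 1) {k : ℕ} (hk : 1 ≤ k) :
    2 * b < oddPowerCombination b k := by
  obtain ⟨hb0, hb1⟩ := hb
  have hbase : 2 * b < oddPowerCombination b 1 := by
    have : b ^ 2 < 1 := pow_lt_one₀ hb0.le hb1 two_ne_zero
    rw [oddPowerCombination_one]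
    nlinarith [mul_pos hb0 (sub_pos.mpr this)]
  exact hbase.trans_le (monotone_oddPowerCombination ⟨hb0.le, hb1.le⟩ hk)

theorem stmt_13 (k : ℕ) (hk : 1 ≤ k) (b : ℝ) (hb : b ∈ Set.Ioo (0:ℝ) 1) :
    2 * b ≤ (1 - b) * (2 * b + 1) ^ (2 * k + 1) + (1 + b) * (2 * b - 1) ^ (2 * k + 1) ∧
    (2 ≤ k → 2 * b < (1 - b) * (2 * b + 1) ^ (2 * k + 1) + (1 + b) * (2 * b - 1) ^ (2 * k + 1)) := by
  have h : 2 * b < oddPowerCombination b k := lt_oddPowerCombination hb hk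
  exact ⟨h.le, fun _ => h⟩
end

section
/- Let w1* ∈ (1/2, 1), w2* = 1 − w1*, and θ* > 0. The equation 1 − w1*·e^{−4 w2* (w1* − w2*) s²} − w2*·e^{4 w1* (w1* − w2*) s²} = 0 in s ≥ 0 has s = 0 as its unique solution; moreover the left-hand side is strictly decreasing in s for s > 0. -/
/-! In the variable `t = s²` the left-hand side is `g t = 1 - w₁ e^{-a t} - w₂ e^{b t}` with
`a = 4 w₂ (w₁ - w₂)` and `b = 4 w₁ (w₁ - w₂)`. The balance `w₁ a = w₂ b` makes
`g' t = w₁ a (e^{-a t} - e^{b t})`, which is negative for `t > 0`; so `g` is strictly decreasing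
on `[0, ∞)` and vanishes only at `t = 0`. -/

open Real Set

theorem hasDerivAt_one_sub_exp_mix (w a b t : ℝ) :
    HasDerivAt (fun t => 1 - w * exp (-(a * t)) - (1 - w) * exp (b * t))
      (w * a * exp (-(a * t)) - (1 - w) * b * exp (b * t)) t := by
  have hneg : HasDerivAt (fun t => w * exp (-(a * t))) (w * (exp (-(a * t)) * -a)) t :=
    (((hasDerivAt_id t).const_mul a).neg.congr_deriv (by simp)).exp.const_mul w
  have hpos : HasDerivAt (fun t => (1 - w) * exp (b * t)) ((1 - w) * (exp (b * t) * b)) t :=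
    (((hasDerivAt_id t).const_mul b).congr_deriv (by simp)).exp.const_mul (1 - w)
  exact (((hasDerivAt_const t 1).sub hneg).sub hpos).congr_deriv (by ring)

theorem strictAntiOn_one_sub_exp_mix {w a b : ℝ} (hw : 0 < w) (ha : 0 < a) (hb : 0 ≤ b)
    (hbalance : w * a = (1 - w) * b) :
    StrictAntiOn (fun t => 1 - w * exp (-(a * t)) - (1 - w) * exp (b * t)) (Ici 0) := by
  refine strictAntiOn_of_deriv_neg (convex_Ici 0) (by fun_prop) fun t ht => ?_
  rw [interior_Ici, mem_Ioi] at ht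
  have hexp : exp (-(a * t)) < exp (b * t) := exp_lt_exp.2 (by nlinarith)
  rw [(hasDerivAt_one_sub_exp_mix w a b t).deriv, ← hbalance, ← mul_sub]
  exact mul_neg_of_pos_of_neg (mul_pos hw ha) (sub_neg.2 hexp)

theorem strictAntiOn_one_sub_exp_mix_sq {w a b : ℝ} (hw : 0 < w) (ha : 0 < a) (hb : 0 ≤ b)
    (hbalance : w * a = (1 - w) * b) :
    StrictAntiOn (fun s => 1 - w * exp (-(a * s ^ 2)) - (1 - w) * exp (b * s ^ 2)) (Ici 0) :=
  (strictAntiOn_one_sub_exp_mix hw ha hb hbalance).comp_strictMonoOn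
    (pow_left_strictMonoOn₀ two_ne_zero) fun s _ => sq_nonneg s

theorem stmt_14_general (w1s : ℝ) (hw1s : w1s ∈ Set.Ioo (1/2 : ℝ) 1) :
    (∀ s : ℝ, 0 ≤ s →
      (1 - w1s * Real.exp (-(4 * (1 - w1s) * (w1s - (1 - w1s)) * s ^ 2)) -
        (1 - w1s) * Real.exp (4 * w1s * (w1s - (1 - w1s)) * s ^ 2) = 0 ↔ s = 0)) ∧
    StrictAntiOn (fun s : ℝ =>
      1 - w1s * Real.exp (-(4 * (1 - w1s) * (w1s - (1 - w1s)) * s ^ 2)) -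
        (1 - w1s) * Real.exp (4 * w1s * (w1s - (1 - w1s)) * s ^ 2)) (Set.Ici 0) := by
  obtain ⟨hhalf, hone⟩ := hw1s
  have hanti := strictAntiOn_one_sub_exp_mix_sq (w := w1s) (by linarith)
    (a := 4 * (1 - w1s) * (w1s - (1 - w1s))) (b := 4 * w1s * (w1s - (1 - w1s)))
    (by nlinarith) (by nlinarith) (by ring)
  refine ⟨fun s hs => ⟨fun hzero => hanti.injOn hs self_mem_Ici ?_, fun h => by simp [h]⟩,
    hanti⟩
  simpa using hzero

theorem stmt_14 (w1s : ℝ) (hw1s : w1s ∈ Set.Ioo (1/2 : ℝ) 1) (θs : ℝ) (hθs : 0 < θs) :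
    (∀ s : ℝ, 0 ≤ s →
      (1 - w1s * Real.exp (-(4 * (1 - w1s) * (w1s - (1 - w1s)) * s ^ 2)) -
        (1 - w1s) * Real.exp (4 * w1s * (w1s - (1 - w1s)) * s ^ 2) = 0 ↔ s = 0)) ∧
    StrictAntiOn (fun s : ℝ =>
      1 - w1s * Real.exp (-(4 * (1 - w1s) * (w1s - (1 - w1s)) * s ^ 2)) -
        (1 - w1s) * Real.exp (4 * w1s * (w1s - (1 - w1s)) * s ^ 2)) (Set.Ici 0) :=
  stmt_14_general w1s hw1s
end

section
/- Let Y have density w1*·φ(y − θ*) + w2*·φ(y + θ*) with θ* > 0, w1* ∈ (1/2, 1), w2* = 1 − w1*. Then ∫ [(w1 e^{yθ} − w2 e^{−yθ})/(w1 e^{yθ} + w2 e^{−yθ})]·(φ(y − θ*) − φ(y + θ*)) dy ≥ 0 for all θ > 0 and w1 ∈ (1/2, 1], where w2 = 1 − w1. -/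
open MeasureTheory Real

theorem stmt_19 (θ θs w1 : ℝ) (hθ : 0 < θ) (hθs : 0 < θs)
    (hw1 : w1 ∈ Set.Ioc (1/2 : ℝ) 1) :
    0 ≤ ∫ y : ℝ,
      ((w1 * Real.exp (y * θ) - (1 - w1) * Real.exp (-(y * θ))) /
        (w1 * Real.exp (y * θ) + (1 - w1) * Real.exp (-(y * θ)))) *
      (gauss (y - θs) - gauss (y + θs)) := by
  obtain ⟨hw1l, hw1r⟩ := hw1
  have hw1pos : 0 < w1 := by linarith
  have hw2 : 0 ≤ 1 - w1 := by linarith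
  set f : ℝ → ℝ := fun y =>
    (w1 * Real.exp (y * θ) - (1 - w1) * Real.exp (-(y * θ))) /
      (w1 * Real.exp (y * θ) + (1 - w1) * Real.exp (-(y * θ))) with hf
  set g : ℝ → ℝ := fun y => gauss (y - θs) - gauss (y + θs) with hg
  set F : ℝ → ℝ := fun y => f y * g y with hF
  -- denominator positivity
  have hden : ∀ y : ℝ, 0 < w1 * Real.exp (y * θ) + (1 - w1) * Real.exp (-(y * θ)) := by
    intro y
    have := Real.exp_pos (y * θ)
    have := Real.exp_pos (-(y * θ))
    positivity
  -- g is odd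
  have hgodd : ∀ y : ℝ, g (-y) = - g y := by
    intro y
    simp only [hg, gauss]
    have h1 : (-y - θs) ^ 2 = (y + θs) ^ 2 := by ring
    have h2 : (-y + θs) ^ 2 = (y - θs) ^ 2 := by ring
    rw [h1, h2]; ring
  -- g nonneg on y ≥ 0
  have hgpos : ∀ y : ℝ, 0 ≤ y → 0 ≤ g y := by
    intro y hy
    simp only [hg, gauss]
    have hsq : (y - θs) ^ 2 ≤ (y + θs) ^ 2 := by nlinarith
    have : Real.exp (-((y + θs) ^ 2) / 2) ≤ Real.exp (-((y - θs) ^ 2) / 2) :=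
      Real.exp_le_exp.mpr (by linarith)
    have hsqrt : 0 ≤ (Real.sqrt (2 * Real.pi))⁻¹ := by positivity
    nlinarith
  -- f y - f (-y) ≥ 0 for y ≥ 0
  have hfdiff : ∀ y : ℝ, 0 ≤ y → 0 ≤ f y - f (-y) := by
    intro y hy
    have hd1 := hden y
    have hd2 := hden (-y)
    simp only [hf]
    rw [div_sub_div _ _ (ne_of_gt hd1) (ne_of_gt hd2)]
    apply div_nonneg _ (le_of_lt (mul_pos hd1 hd2))
    simp only [neg_mul, neg_neg]
    set u := Real.exp (y * θ) with hu
    set v := Real.exp (-(y * θ)) with hv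
    have huv : v ≤ u := Real.exp_le_exp.mpr (by nlinarith)
    have hvpos : 0 < v := Real.exp_pos _
    have key : (w1 * u - (1 - w1) * v) * (w1 * v + (1 - w1) * u) -
        (w1 * u + (1 - w1) * v) * (w1 * v - (1 - w1) * u)
        = 2 * w1 * (1 - w1) * (u - v) * (u + v) := by ring
    rw [key]
    have : 0 ≤ u - v := by linarith
    have : 0 ≤ u + v := by positivity
    positivity
  -- pointwise: F y + F (-y) ≥ 0
  have hkey : ∀ y : ℝ, 0 ≤ F y + F (-y) := by
    intro y
    rcases le_total 0 y with hy | hy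
    · have : F y + F (-y) = (f y - f (-y)) * g y := by
        simp only [hF]; rw [hgodd]; ring
      rw [this]
      exact mul_nonneg (hfdiff y hy) (hgpos y hy)
    · have hy' : 0 ≤ -y := by linarith
      have : F y + F (-y) = (f (-y) - f (-(-y))) * g (-y) := by
        simp only [hF]; rw [hgodd, neg_neg]; ring
      rw [this]
      exact mul_nonneg (hfdiff (-y) hy') (hgpos (-y) hy')
  -- main argument
  by_cases hI : Integrable F volume
  · have hIneg : Integrable (fun y => F (-y)) volume := hI.comp_neg
    have heq : (∫ y, F (-y)) = ∫ y, F y := integral_neg_eq_self F volume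
    have hsum : 0 ≤ ∫ y, (F y + F (-y)) := integral_nonneg hkey
    rw [integral_add hI hIneg, heq] at hsum
    show 0 ≤ ∫ y, F y
    linarith
  · show 0 ≤ ∫ y, F y
    rw [integral_undef hI]
end
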